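/- Under the hold-out evaluation setup (no symmetry assumption) with homoskedastic errors σ_j² = σ² for all j, the variance of the centered hold-out loss is bounded by sixteen times σ²/m times its expectation: Var(L) ≤ (16σ²/m) · E[L]. -/

import Mathlib

/-!
Since `(a_j - ε_j)² - ε_j² = a_j² - 2 a_j ε_j`, the loss `L` is affine in independent centered
errors. Hence `E[L] = (1/m) ∑ a_j²` and, by independence,
`Var(L) = (1/m²) ∑ 4 a_j² σ² = (4σ²/m) E[L]`, which is at most `(16σ²/m) E[L]` as `E[L] ≥ 0`.
-/

open MeasureTheory ProbabilityTheory

namespace ProbabilityTheory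

variable {Ω ι : Type*} [MeasurableSpace Ω] {P : Measure Ω} [IsProbabilityMeasure P]

lemma variance_const_add_const_mul {X : Ω → ℝ} (hX : AEStronglyMeasurable X P) (c b : ℝ) :
    Var[fun ω => c + b * X ω; P] = b ^ 2 * Var[X; P] := by
  rw [variance_const_add (hX.const_mul b), variance_const_mul]

lemma iIndepFun.variance_sum_const_add_const_mul [Fintype ι] {X : ι → Ω → ℝ}
    (hX : iIndepFun X P) (hL2 : ∀ i, MemLp (X i) 2 P) (c b : ι → ℝ) :
    Var[fun ω => ∑ i, (c i + b i * X i ω); P] = ∑ i, b i ^ 2 * Var[X i; P] := by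
  have hY : iIndepFun (fun i ω => c i + b i * X i ω) P :=
    hX.comp (fun i x => c i + b i * x) fun _ => by fun_prop
  have hsum : (fun ω => ∑ i, (c i + b i * X i ω)) = ∑ i, fun ω => c i + b i * X i ω := by
    funext ω
    simp
  rw [hsum, IndepFun.variance_sum (X := fun i ω => c i + b i * X i ω)
    (fun i _ => (memLp_const (c i)).add ((hL2 i).const_mul (b i)))
    fun i _ j _ hij => hY.indepFun hij]
  exact Finset.sum_congr rfl fun i _ =>
    variance_const_add_const_mul (hL2 i).aestronglyMeasurable (c i) (b i)

lemma integral_sum_const_add_const_mul [Fintype ι] {X : ι → Ω → ℝ}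
    (hX : ∀ i, Integrable (X i) P) (c b : ι → ℝ) :
    ∫ ω, ∑ i, (c i + b i * X i ω) ∂P = ∑ i, (c i + b i * ∫ ω, X i ω ∂P) := by
  rw [integral_finsetSum (f := fun i ω => c i + b i * X i ω) _
    fun i _ => (integrable_const (c i)).add ((hX i).const_mul (b i))]
  refine Finset.sum_congr rfl fun i _ => ?_
  rw [integral_add (integrable_const (c i)) ((hX i).const_mul (b i)), integral_const_mul]
  simp

end ProbabilityTheory

theorem holdout_variance_curve_general_general
    {Ω : Type*} [MeasurableSpace Ω] {P : Measure Ω} [IsProbabilityMeasure P]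
    (m : ℕ) (a : Fin m → ℝ) (ε : Fin m → Ω → ℝ) (σ : ℝ)
    (hindep : iIndepFun ε P)
    (hL2 : ∀ j, MemLp (ε j) 2 P)
    (hmean : ∀ j, ∫ ω, ε j ω ∂P = 0)
    (hvar : ∀ j, ∫ ω, (ε j ω) ^ 2 ∂P = σ ^ 2) :
    variance (fun ω => (1 / m : ℝ) * ∑ j, ((a j - ε j ω) ^ 2 - (ε j ω) ^ 2)) P
      ≤ (16 * σ ^ 2 / m) *
        ∫ ω, (1 / m : ℝ) * ∑ j, ((a j - ε j ω) ^ 2 - (ε j ω) ^ 2) ∂P := by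
  have hloss : ∀ j ω, (a j - ε j ω) ^ 2 - ε j ω ^ 2 = a j ^ 2 + -2 * a j * ε j ω :=
    fun _ _ => by ring
  have hvarε : ∀ j, Var[ε j; P] = σ ^ 2 := fun j =>
    (variance_of_integral_eq_zero (hL2 j).aemeasurable (hmean j)).trans (hvar j)
  simp_rw [hloss, variance_const_mul, integral_const_mul,
    hindep.variance_sum_const_add_const_mul hL2,
    integral_sum_const_add_const_mul fun j => (hL2 j).integrable one_le_two, hmean, hvarε]
  have hS : 0 ≤ ∑ j, a j ^ 2 := Finset.sum_nonneg fun j _ => sq_nonneg (a j)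
  calc (1 / m : ℝ) ^ 2 * ∑ j, (-2 * a j) ^ 2 * σ ^ 2
      = 4 * σ ^ 2 / m * (1 / m * ∑ j, a j ^ 2) := by
        simp_rw [mul_pow, Finset.mul_sum]
        exact Finset.sum_congr rfl fun j _ => by ring
    _ ≤ 16 * σ ^ 2 / m * (1 / m * ∑ j, (a j ^ 2 + -2 * a j * 0)) := by
        simp only [mul_zero, add_zero]
        gcongr
        norm_num

/-- Theorem 2, homoskedastic case: `Var(L) ≤ (16σ²/m) · E[L]`. -/
theorem holdout_variance_curve_general
    {Ω : Type*} [MeasurableSpace Ω] {P : Measure Ω} [IsProbabilityMeasure P]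
    (m : ℕ) (hm : 0 < m) (a : Fin m → ℝ) (ε : Fin m → Ω → ℝ) (σ : ℝ)
    (hmeas : ∀ j, Measurable (ε j))
    (hindep : iIndepFun ε P)
    (hL2 : ∀ j, MemLp (ε j) 2 P)
    (hmean : ∀ j, ∫ ω, ε j ω ∂P = 0)
    (hvar : ∀ j, ∫ ω, (ε j ω) ^ 2 ∂P = σ ^ 2) :
    variance (fun ω => (1 / m : ℝ) * ∑ j, ((a j - ε j ω) ^ 2 - (ε j ω) ^ 2)) P
      ≤ (16 * σ ^ 2 / m) *
        ∫ ω, (1 / m : ℝ) * ∑ j, ((a j - ε j ω) ^ 2 - (ε j ω) ^ 2) ∂P :=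
  holdout_variance_curve_general_general m a ε σ hindep hL2 hmean hvar
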